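/- Let (x₁,y₁) and (x₂,y₂) be points of the Okubic affine plane with x₁ ≠ x₂. Then there exists a unique pair (s,t) ∈ 𝒪×𝒪 such that y₁ = s*x₁ + t and y₂ = s*x₂ + t; moreover the slope is s = n(x₁−x₂)⁻¹·((x₁−x₂)*(y₁−y₂)). -/

import Mathlib

open Matrix Complex

noncomputable section

/-- `3 × 3` complex matrices. -/
abbrev M3 : Type := Matrix (Fin 3) (Fin 3) ℂ

/-- The real Okubo algebra: `3 × 3` traceless Hermitian complex matrices. -/
def Okubo : Set M3 := {x | x.IsHermitian ∧ x.trace = 0}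

/-- The constant `μ = (3 + i√3)/6`. -/
def okMu : ℂ := (3 + (Real.sqrt 3 : ℂ) * Complex.I) / 6

/-- The Okubo product `x*y = μ·(xy) + μ̄·(yx) − (1/3)Tr(xy)·Id`. -/
def omul (x y : M3) : M3 :=
  okMu • (x * y) + (starRingEnd ℂ) okMu • (y * x) - ((1 / 3 : ℂ) * (x * y).trace) • (1 : M3)

/-- The Okubic norm `n(x) = (1/6)Tr(x²)` (real-valued on Hermitian matrices). -/
def onorm (x : M3) : ℝ := (1 / 6) * ((x * x).trace).re

/-- The polar form `⟨x,y⟩ = n(x+y) − n(x) − n(y)` of the Okubic norm. -/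
def opolar (x y : M3) : ℝ := onorm (x + y) - onorm x - onorm y

/-! The Okubo product is a symmetric composition: `x * (y * x) = (x * y) * x = n(x) y`. This comes
from the polarized Cayley–Hamilton identity for traceless `3 × 3` matrices together with
`μ + μ̄ = 1` and `μ μ̄ = μ² + μ̄² = 1/3`. As `n` is positive definite, right multiplication by
`x = x₁ - x₂ ≠ 0` is therefore invertible, with inverse `n(x)⁻¹ (x * ·)`. A line `[s,t]` passes
through both points iff `s * (x₁ - x₂) = y₁ - y₂` and `t = y₁ - s * x₁`, which determines first `s`
and then `t`. -/

lemma okMu_add_conj : okMu + (starRingEnd ℂ) okMu = 1 := by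
  simp only [okMu, map_div₀, map_add, map_mul, map_ofNat, Complex.conj_ofReal, Complex.conj_I]
  ring

lemma okMu_mul_conj : okMu * (starRingEnd ℂ) okMu = 1 / 3 := by
  have h3 : ((Real.sqrt 3 : ℝ) : ℂ) ^ 2 = 3 := by
    norm_cast; exact Real.sq_sqrt (by norm_num)
  simp only [okMu, map_div₀, map_add, map_mul, map_ofNat, Complex.conj_ofReal, Complex.conj_I]
  linear_combination (1 / 36 : ℂ) * h3 - ((Real.sqrt 3 : ℂ) ^ 2 / 36) * Complex.I_sq

lemma okMu_sq_add_conj_sq : okMu ^ 2 + (starRingEnd ℂ) okMu ^ 2 = 1 / 3 := by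
  linear_combination (okMu + (starRingEnd ℂ) okMu + 1) * okMu_add_conj - 2 * okMu_mul_conj

lemma trace_omul (x y : M3) : (omul x y).trace = 0 := by
  simp only [omul, trace_sub, trace_add, trace_smul, trace_one, Matrix.trace_mul_comm y x,
    Fintype.card_fin, smul_eq_mul]
  push_cast
  linear_combination (x * y).trace * okMu_add_conj

lemma conjTranspose_omul (x y : M3) : (omul x y)ᴴ = omul xᴴ yᴴ := by
  have htr : star (x * y).trace = (xᴴ * yᴴ).trace := by
    rw [← trace_conjTranspose, conjTranspose_mul, trace_mul_comm]
  simp only [omul, conjTranspose_sub, conjTranspose_add, conjTranspose_smul, conjTranspose_mul,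
    conjTranspose_one, star_mul', htr, starRingEnd_apply, star_star, star_div₀, star_one,
    star_ofNat]
  abel

lemma transpose_omul (x y : M3) : (omul x y)ᵀ = omul yᵀ xᵀ := by
  simp only [omul, transpose_sub, transpose_add, transpose_smul, transpose_mul, transpose_one,
    ← trace_transpose (x * y)]

lemma omul_mem {x y : M3} (hx : x ∈ Okubo) (hy : y ∈ Okubo) : omul x y ∈ Okubo :=
  ⟨by rw [IsHermitian, conjTranspose_omul, hx.1, hy.1], trace_omul x y⟩

lemma Okubo.sub_mem {x y : M3} (hx : x ∈ Okubo) (hy : y ∈ Okubo) : x - y ∈ Okubo :=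
  ⟨hx.1.sub hy.1, by rw [trace_sub, hx.2, hy.2, sub_zero]⟩

lemma Okubo.smul_mem (r : ℝ) {x : M3} (hx : x ∈ Okubo) : r • x ∈ Okubo :=
  ⟨hx.1.smul (IsSelfAdjoint.all r), by rw [trace_smul, hx.2, smul_zero]⟩

lemma omul_sub_right (s x y : M3) : omul s (x - y) = omul s x - omul s y := by
  simp only [omul, Matrix.sub_mul, trace_sub, mul_sub, sub_smul, smul_sub]
  abel

lemma omul_smul_left (c : ℂ) (x y : M3) : omul (c • x) y = c • omul x y := by
  simp only [omul, Matrix.smul_mul, Matrix.mul_smul, trace_smul, smul_eq_mul]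
  match_scalars <;> ring

lemma polarized_cayley_hamilton {x y : M3} (hx : x.trace = 0) (hy : y.trace = 0) :
    x * (x * y) + x * (y * x) + y * (x * x) =
      (x * y).trace • x + ((1 / 2 : ℂ) * (x * x).trace) • y + (x * (x * y)).trace • 1 := by
  rw [trace_fin_three] at hx hy
  have hx₂₂ : x 2 2 = -(x 0 0 + x 1 1) := by linear_combination hx
  have hy₂₂ : y 2 2 = -(y 0 0 + y 1 1) := by linear_combination hy
  ext i j
  fin_cases i <;> fin_cases j <;>
    (simp [mul_apply, trace_fin_three, Fin.sum_univ_three, one_apply, hx₂₂, hy₂₂]; ring)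

lemma omul_omul_self_right {x y : M3} (hx : x.trace = 0) (hy : y.trace = 0) :
    omul x (omul y x) = ((1 / 6 : ℂ) * (x * x).trace) • y := by
  have hxyx : x * (y * x) = (x * y).trace • x + ((1 / 2 : ℂ) * (x * x).trace) • y
      + (x * (x * y)).trace • 1 - x * (x * y) - y * (x * x) := by
    rw [← polarized_cayley_hamilton hx hy]; abel
  have htr : (y * (x * x)).trace = (x * (x * y)).trace := by
    rw [← Matrix.mul_assoc, ← Matrix.mul_assoc, trace_mul_cycle, trace_mul_cycle]
  simp only [omul, Matrix.mul_add, Matrix.mul_sub, Matrix.add_mul, Matrix.sub_mul,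
    Matrix.mul_smul, Matrix.smul_mul, Matrix.mul_one, Matrix.one_mul, trace_add, trace_sub,
    trace_smul, trace_one, smul_add, smul_sub, smul_smul, hx, hy, Fintype.card_fin,
    Matrix.mul_assoc, smul_eq_mul, htr, trace_mul_comm y x, hxyx]
  match_scalars
  · linear_combination (x * y).trace * okMu_sq_add_conj_sq - (x * y).trace / 3 * okMu_add_conj
  · linear_combination (1 / 2 : ℂ) * (x * x).trace * okMu_sq_add_conj_sq
  · linear_combination (x * (x * y)).trace * okMu_sq_add_conj_sq
      - (x * (x * y)).trace / 3 * okMu_add_conj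
  · linear_combination okMu_mul_conj - okMu_sq_add_conj_sq
  · linear_combination okMu_mul_conj - okMu_sq_add_conj_sq

lemma omul_omul_self_left {x y : M3} (hx : x.trace = 0) (hy : y.trace = 0) :
    omul (omul x y) x = ((1 / 6 : ℂ) * (x * x).trace) • y := by
  rw [← transpose_transpose (omul (omul x y) x), transpose_omul, transpose_omul x y,
    omul_omul_self_right (by rwa [trace_transpose]) (by rwa [trace_transpose]), transpose_smul,
    transpose_transpose, ← transpose_mul, trace_transpose]

open scoped ComplexOrder in
lemma ofReal_onorm {x : M3} (hx : x.IsHermitian) : (onorm x : ℂ) = (1 / 6) * (x * x).trace := by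
  have hnonneg : 0 ≤ (x * x).trace := by
    simpa only [hx.eq] using (posSemidef_conjTranspose_mul_self x).trace_nonneg
  have him : (x * x).trace.im = 0 := (Complex.nonneg_iff.1 hnonneg).2.symm
  rw [onorm, Complex.ofReal_mul, ← Complex.re_add_im (x * x).trace, him]
  simp

open scoped ComplexOrder in
lemma onorm_pos {x : M3} (hx : x.IsHermitian) (hx0 : x ≠ 0) : 0 < onorm x := by
  have hpos : 0 < (x * x).trace := by
    nth_rewrite 1 [← hx.eq]
    exact (posSemidef_conjTranspose_mul_self x).trace_nonneg.lt_of_ne'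
      (trace_conjTranspose_mul_self_eq_zero_iff.not.2 hx0)
  have hre : 0 < (x * x).trace.re := (Complex.lt_def.1 hpos).1
  rw [onorm]
  positivity

theorem omul_eq_iff_eq_onorm_inv_smul {x s z : M3} (hx : x ∈ Okubo) (hx0 : x ≠ 0)
    (hs : s.trace = 0) (hz : z.trace = 0) :
    omul s x = z ↔ s = (onorm x)⁻¹ • omul x z := by
  have hn : onorm x ≠ 0 := (onorm_pos hx.1 hx0).ne'
  have hnorm : ((1 / 6 : ℂ) * (x * x).trace) = (onorm x : ℂ) := (ofReal_onorm hx.1).symm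
  constructor
  · rintro rfl
    rw [omul_omul_self_right hx.2 hs, hnorm, Complex.coe_smul, inv_smul_smul₀ hn]
  · rintro rfl
    rw [← Complex.coe_smul, omul_smul_left, omul_omul_self_left hx.2 hz, hnorm, smul_smul,
      ← Complex.ofReal_mul, inv_mul_cancel₀ hn, Complex.ofReal_one, one_smul]

theorem eq_omul_add_and_eq_omul_add_iff (s t x₁ y₁ x₂ y₂ : M3) :
    (y₁ = omul s x₁ + t ∧ y₂ = omul s x₂ + t) ↔
      (omul s (x₁ - x₂) = y₁ - y₂ ∧ t = y₁ - omul s x₁) := by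
  rw [omul_sub_right]
  constructor
  · rintro ⟨rfl, rfl⟩
    constructor <;> abel
  · rintro ⟨h, rfl⟩
    refine ⟨by abel, ?_⟩
    rw [← sub_sub_cancel y₁ y₂, ← h]
    abel

/-- Two points `(x₁,y₁)`, `(x₂,y₂)` of the Okubic affine plane
with `x₁ ≠ x₂` are joined by a unique line `[s,t]`, whose slope is
`s = n(x₁−x₂)⁻¹ • ((x₁−x₂)*(y₁−y₂))`. -/
theorem okubo_paper_stmt11 (x₁ y₁ x₂ y₂ : M3)
    (hx₁ : x₁ ∈ Okubo) (hy₁ : y₁ ∈ Okubo) (hx₂ : x₂ ∈ Okubo) (hy₂ : y₂ ∈ Okubo)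
    (hne : x₁ ≠ x₂) :
    (∃! p : M3 × M3, p.1 ∈ Okubo ∧ p.2 ∈ Okubo ∧
      y₁ = omul p.1 x₁ + p.2 ∧ y₂ = omul p.1 x₂ + p.2) ∧
    (∀ s ∈ Okubo, ∀ t ∈ Okubo,
      y₁ = omul s x₁ + t → y₂ = omul s x₂ + t →
        s = (onorm (x₁ - x₂))⁻¹ • omul (x₁ - x₂) (y₁ - y₂)) := by
  set slope := (onorm (x₁ - x₂))⁻¹ • omul (x₁ - x₂) (y₁ - y₂)
  have hx : x₁ - x₂ ∈ Okubo := Okubo.sub_mem hx₁ hx₂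
  have hy : y₁ - y₂ ∈ Okubo := Okubo.sub_mem hy₁ hy₂
  have through_iff (s t : M3) (hs : s ∈ Okubo) :
      (y₁ = omul s x₁ + t ∧ y₂ = omul s x₂ + t) ↔ (s = slope ∧ t = y₁ - omul s x₁) := by
    rw [eq_omul_add_and_eq_omul_add_iff,
      omul_eq_iff_eq_onorm_inv_smul hx (sub_ne_zero.2 hne) hs.2 hy.2]
  have hslope : slope ∈ Okubo := Okubo.smul_mem _ (omul_mem hx hy)
  refine ⟨⟨(slope, y₁ - omul slope x₁), ⟨hslope, Okubo.sub_mem hy₁ (omul_mem hslope hx₁),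
    (through_iff _ _ hslope).2 ⟨rfl, rfl⟩⟩, ?_⟩, ?_⟩
  · rintro ⟨s, t⟩ ⟨hs, -, hst⟩
    obtain ⟨rfl, rfl⟩ := (through_iff s t hs).1 hst
    rfl
  · intro s hs t _ h₁ h₂
    exact ((through_iff s t hs).1 ⟨h₁, h₂⟩).1

end
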